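/- Let α > 0 and β > 0 be real. Then the function z ↦ F(-α, -β; 1; |z|²) is subharmonic on the open unit disk, i.e., its Laplacian is nonnegative there. -/

import Mathlib

/-- Pochhammer symbol `(a)_n` for real `a`. -/
noncomputable def pochR (a : ℝ) (n : ℕ) : ℝ := ∏ i ∈ Finset.range n, (a + i)

/-- Gauss hypergeometric function `F(a,b;c;x)` with real parameters. -/
noncomputable def hypFR (a b c x : ℝ) : ℝ :=
  ∑' n : ℕ, pochR a n * pochR b n / (pochR c n * (Nat.factorial n : ℝ)) * x ^ n

/-- The Laplacian `Δf = ∂²f/∂x² + ∂²f/∂y²` of a function `f : ℂ → ℝ`. -/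
noncomputable def lap (f : ℂ → ℝ) (z : ℂ) : ℝ :=
  fderiv ℝ (fun w => fderiv ℝ f w 1) z 1 +
    fderiv ℝ (fun w => fderiv ℝ f w Complex.I) z Complex.I

namespace SubH

lemma pochR_zero (a : ℝ) : pochR a 0 = 1 := by simp [pochR]

lemma pochR_succ (a : ℝ) (n : ℕ) : pochR a (n+1) = pochR a n * (a + n) := by
  simp [pochR, Finset.prod_range_succ]

lemma pochR_succ' (a : ℝ) (n : ℕ) : pochR a (n+1) = a * pochR (a+1) n := by
  induction n with
  | zero => simp [pochR]
  | succ n ih =>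
    rw [pochR_succ, ih, pochR_succ]
    push_cast
    ring

lemma pochR_one (n : ℕ) : pochR 1 n = (Nat.factorial n : ℝ) := by
  induction n with
  | zero => simp [pochR]
  | succ n ih =>
    rw [pochR_succ, ih, Nat.factorial_succ]
    push_cast
    ring

variable (α β : ℝ)

/-- coefficients of `F(-α,-β;1;u)` -/
noncomputable def cc (n : ℕ) : ℝ :=
  pochR (-α) n * pochR (-β) n / ((Nat.factorial n : ℝ) * (Nat.factorial n))

/-- coefficients of `F(1-α,1-β;1;u)` -/
noncomputable def dd (n : ℕ) : ℝ :=
  pochR (1-α) n * pochR (1-β) n / ((Nat.factorial n : ℝ) * (Nat.factorial n))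

/-- coefficients of `F(α,β;1;u)` -/
noncomputable def ee (n : ℕ) : ℝ :=
  pochR α n * pochR β n / ((Nat.factorial n : ℝ) * (Nat.factorial n))

/-- coefficients of `(1-u)^{-(α+β-1)}` -/
noncomputable def bb (n : ℕ) : ℝ := pochR (α+β-1) n / (Nat.factorial n : ℝ)

lemma factorial_ne_zero (n : ℕ) : (Nat.factorial n : ℝ) ≠ 0 := by
  exact_mod_cast Nat.factorial_ne_zero n

lemma cc_zero : cc α β 0 = 1 := by simp [cc, pochR_zero]
lemma dd_zero : dd α β 0 = 1 := by simp [dd, pochR_zero]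
lemma ee_zero : ee α β 0 = 1 := by simp [ee, pochR_zero]
lemma bb_zero : bb α β 0 = 1 := by simp [bb, pochR_zero]

lemma cc_succ (n : ℕ) :
    ((n:ℝ)+1)^2 * cc α β (n+1) = ((n:ℝ) - α) * ((n:ℝ) - β) * cc α β n := by
  have h := factorial_ne_zero n
  rw [cc, cc, pochR_succ, pochR_succ, Nat.factorial_succ]
  push_cast
  field_simp
  ring

lemma key_cd (n : ℕ) :
    ((n:ℝ)+1)^2 * cc α β (n+1) = α * β * dd α β n := by
  have h := factorial_ne_zero n
  have h1 : -α + 1 = 1 - α := by ring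
  have h2 : -β + 1 = 1 - β := by ring
  rw [cc, dd, pochR_succ', pochR_succ', h1, h2, Nat.factorial_succ]
  push_cast
  field_simp

lemma dd_succ (n : ℕ) :
    ((n:ℝ)+1)^2 * dd α β (n+1) = (1 - α + n) * (1 - β + n) * dd α β n := by
  have h := factorial_ne_zero n
  rw [dd, dd, pochR_succ, pochR_succ, Nat.factorial_succ]
  push_cast
  field_simp

lemma ee_succ (n : ℕ) :
    ((n:ℝ)+1)^2 * ee α β (n+1) = (α + n) * (β + n) * ee α β n := by
  have h := factorial_ne_zero n
  rw [ee, ee, pochR_succ, pochR_succ, Nat.factorial_succ]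
  push_cast
  field_simp

lemma bb_succ (n : ℕ) :
    ((n:ℝ)+1) * bb α β (n+1) = (α + β - 1 + n) * bb α β n := by
  have h := factorial_ne_zero n
  rw [bb, bb, pochR_succ, Nat.factorial_succ]
  push_cast
  field_simp

lemma ee_nonneg (hα : 0 < α) (hβ : 0 < β) (n : ℕ) : 0 ≤ ee α β n := by
  have h1 : 0 ≤ pochR α n := Finset.prod_nonneg fun i _ => by positivity
  have h2 : 0 ≤ pochR β n := Finset.prod_nonneg fun i _ => by positivity
  have h3 : 0 < (Nat.factorial n : ℝ) := by exact_mod_cast Nat.factorial_pos n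
  exact div_nonneg (mul_nonneg h1 h2) (by positivity)

/-- WZ-style certificate step. -/
lemma conv_step {n k : ℕ} (hk : k ≤ n) :
    (((n:ℝ)+1)^2 - (k:ℝ)^2) * (dd α β k * bb α β (n+1-k))
      + ((k:ℝ)+1)^2 * (dd α β (k+1) * bb α β (n-k))
    = ((n:ℝ) + α) * ((n:ℝ) + β) * (dd α β k * bb α β (n-k)) := by
  obtain ⟨m, rfl⟩ := Nat.exists_eq_add_of_le hk
  have h1 : k + m + 1 - k = m + 1 := by omega
  have h2 : k + m - k = m := by omega
  rw [h1, h2]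
  have hb := bb_succ α β m
  have hd := dd_succ α β k
  have hm : ((m:ℝ)+1) ≠ 0 := by positivity
  have hk1 : ((k:ℝ)+1)^2 ≠ 0 := by positivity
  have hbv : bb α β (m+1) = (α + β - 1 + m) * bb α β m / ((m:ℝ)+1) := by
    field_simp at hb ⊢; linarith [hb]
  have hdv : dd α β (k+1) = (1 - α + k) * (1 - β + k) * dd α β k / ((k:ℝ)+1)^2 := by
    field_simp at hd ⊢; linarith [hd]
  rw [hbv, hdv]
  push_cast
  field_simp
  ring

/-- Convolution sum. -/
noncomputable def SS (n : ℕ) : ℝ := ∑ k ∈ Finset.range (n+1), dd α β k * bb α β (n-k)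

lemma conv_rec (n : ℕ) :
    ((n:ℝ)+1)^2 * SS α β (n+1) = ((n:ℝ) + α) * ((n:ℝ) + β) * SS α β n := by
  have step : ∑ k ∈ Finset.range (n+1),
      ((((n:ℝ)+1)^2 - (k:ℝ)^2) * (dd α β k * bb α β (n+1-k))
        + ((k:ℝ)+1)^2 * (dd α β (k+1) * bb α β (n-k)))
      = ((n:ℝ) + α) * ((n:ℝ) + β) * SS α β n := by
    rw [SS, Finset.mul_sum]
    exact Finset.sum_congr rfl fun k hk =>
      conv_step α β (Nat.lt_succ_iff.mp (Finset.mem_range.mp hk))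
  rw [Finset.sum_add_distrib] at step
  have e1 : ∑ k ∈ Finset.range (n+1),
      (((n:ℝ)+1)^2 - (k:ℝ)^2) * (dd α β k * bb α β (n+1-k))
      = ∑ k ∈ Finset.range (n+2),
      (((n:ℝ)+1)^2 - (k:ℝ)^2) * (dd α β k * bb α β (n+1-k)) := by
    rw [Finset.sum_range_succ (n := n+1)]
    push_cast
    ring
  have e2 : ∑ k ∈ Finset.range (n+1),
      ((k:ℝ)+1)^2 * (dd α β (k+1) * bb α β (n-k))
      = ∑ k ∈ Finset.range (n+2), (k:ℝ)^2 * (dd α β k * bb α β (n+1-k)) := by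
    rw [Finset.sum_range_succ' (fun k => (k:ℝ)^2 * (dd α β k * bb α β (n+1-k))) (n+1)]
    simp only [Nat.succ_sub_succ_eq_sub]
    push_cast
    norm_num
  rw [e1, e2] at step
  rw [← step, ← Finset.sum_add_distrib, SS, Finset.mul_sum]
  exact Finset.sum_congr rfl fun k _ => by push_cast; ring

/-- The Euler-transform convolution identity. -/
lemma conv_eq (n : ℕ) : SS α β n = ee α β n := by
  induction n with
  | zero => rw [SS]; simp [dd_zero, bb_zero, ee_zero]
  | succ n ih =>
    have h1 := conv_rec α β n
    have h2 := ee_succ α β n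
    have hn : (((n:ℝ)+1)^2) ≠ 0 := by positivity
    rw [ih] at h1
    have : ((n:ℝ)+1)^2 * SS α β (n+1) = ((n:ℝ)+1)^2 * ee α β (n+1) := by
      rw [h1, h2]; ring
    exact mul_left_cancel₀ hn this


open Filter Topology

/-- Ratio bound property for power series coefficients. -/
def RB (a : ℕ → ℝ) (K : ℝ) : Prop :=
  ∀ n : ℕ, |a (n+1)| * ((n:ℝ)+1)^2 ≤ ((n:ℝ)+K)^2 * |a n|

lemma RB.abs {a : ℕ → ℝ} {K : ℝ} (h : RB a K) : RB (fun n => |a n|) K := by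
  intro n; simpa [abs_abs] using h n

/-- shift operator on coefficients: coefficients of the derivative series. -/
noncomputable def shf (a : ℕ → ℝ) : ℕ → ℝ := fun n => ((n:ℝ)+1) * a (n+1)

lemma RB.shift {a : ℕ → ℝ} {K : ℝ} (hK : 0 ≤ K) (h : RB a K) : RB (SubH.shf a) (K+1) := by
  intro n
  have h1 := h (n+1)
  have hn2 : (0:ℝ) < (n:ℝ)+2 := by positivity
  have e1 : |SubH.shf a (n+1)| = ((n:ℝ)+2) * |a (n+2)| := by
    simp only [SubH.shf]
    push_cast
    rw [abs_mul, abs_of_nonneg (by positivity : (0:ℝ) ≤ (n:ℝ)+1+1)]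
    norm_num
    left; ring
  have e2 : |SubH.shf a n| = ((n:ℝ)+1) * |a (n+1)| := by
    simp only [SubH.shf]
    rw [abs_mul, abs_of_nonneg (by positivity : (0:ℝ) ≤ (n:ℝ)+1)]
  rw [e1, e2]
  have h1' : |a (n+2)| * ((n:ℝ)+2)^2 ≤ ((n:ℝ)+1+K)^2 * |a (n+1)| := by
    push_cast at h1 ⊢; linarith
  have hb : (0 ≤ |a (n+1)|) := abs_nonneg _
  have hmul : |a (n+2)| * ((n:ℝ)+2)^2 * (((n:ℝ)+1)^2 * ((n:ℝ)+1))
      ≤ ((n:ℝ)+1+K)^2 * |a (n+1)| * (((n:ℝ)+1)^2 * ((n:ℝ)+1)) := by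
    apply mul_le_mul_of_nonneg_right h1' (by positivity)
  nlinarith [abs_nonneg (a (n+2)), sq_nonneg ((n:ℝ)+1+K)]

/-- summability of `∑ a n * x^n` for `|x| < 1` under a ratio bound. -/
lemma RB.summable {a : ℕ → ℝ} {K : ℝ} (h : RB a K) {x : ℝ} (hx : |x| < 1) :
    Summable (fun n => a n * x ^ n) := by
  set r : ℝ := (1 + |x|)/2 with hr
  have hr1 : r < 1 := by rw [hr]; linarith
  have hxr : |x| < r := by rw [hr]; linarith
  apply summable_of_ratio_norm_eventually_le hr1
  have htend : Tendsto (fun n : ℕ => (1 + (K-1) * (1/((n:ℝ)+1)))^2 * |x|) atTop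
      (𝓝 ((1 + (K-1) * 0)^2 * |x|)) := by
    apply Tendsto.mul_const
    apply Tendsto.pow
    exact tendsto_const_nhds.add (tendsto_const_nhds.mul tendsto_one_div_add_atTop_nhds_zero_nat)
  have hlim : ((1:ℝ) + (K-1) * 0)^2 * |x| < r := by simpa using hxr

  have hev : ∀ᶠ n : ℕ in atTop, (1 + (K-1) * (1/((n:ℝ)+1)))^2 * |x| < r :=
    htend.eventually (gt_mem_nhds hlim)
  filter_upwards [hev] with n hn
  have hn1 : (0:ℝ) < (n:ℝ)+1 := by positivity
  have hid : ((n:ℝ)+K) = (1 + (K-1) * (1/((n:ℝ)+1))) * ((n:ℝ)+1) := by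
    field_simp
    ring
  have hB : ((n:ℝ)+K)^2 * |x| ≤ r * ((n:ℝ)+1)^2 := by
    rw [hid, mul_pow]
    calc (1 + (K-1)*(1/((n:ℝ)+1)))^2 * ((n:ℝ)+1)^2 * |x|
        = ((1 + (K-1)*(1/((n:ℝ)+1)))^2 * |x|) * ((n:ℝ)+1)^2 := by ring
      _ ≤ r * ((n:ℝ)+1)^2 := by
          apply mul_le_mul_of_nonneg_right (le_of_lt hn) (by positivity)
  have hA := h n
  have step : |a (n+1)| * |x| * ((n:ℝ)+1)^2 ≤ r * |a n| * ((n:ℝ)+1)^2 := by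
    calc |a (n+1)| * |x| * ((n:ℝ)+1)^2 = (|a (n+1)| * ((n:ℝ)+1)^2) * |x| := by ring
      _ ≤ (((n:ℝ)+K)^2 * |a n|) * |x| :=
          mul_le_mul_of_nonneg_right hA (abs_nonneg x)
      _ = (((n:ℝ)+K)^2 * |x|) * |a n| := by ring
      _ ≤ (r * ((n:ℝ)+1)^2) * |a n| := mul_le_mul_of_nonneg_right hB (abs_nonneg _)
      _ = r * |a n| * ((n:ℝ)+1)^2 := by ring
  have step2 : |a (n+1)| * |x| ≤ r * |a n| :=
    le_of_mul_le_mul_right step (by positivity)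
  have : ‖a (n+1) * x^(n+1)‖ = |a (n+1)| * |x| * |x|^n := by
    rw [Real.norm_eq_abs, abs_mul, abs_pow, pow_succ]; ring
  rw [this, Real.norm_eq_abs, abs_mul, abs_pow]
  calc |a (n+1)| * |x| * |x|^n ≤ (r * |a n|) * |x|^n :=
        mul_le_mul_of_nonneg_right step2 (by positivity)
    _ = r * (|a n| * |x|^n) := by ring

/-- sum of the power series with coefficients `a`. -/
noncomputable def psum (a : ℕ → ℝ) (x : ℝ) : ℝ := ∑' n, a n * x ^ n

lemma RB_of_sq {a : ℕ → ℝ} {K : ℝ} (hK : 0 ≤ K)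
    (h : ∀ n : ℕ, ∃ p q : ℝ, |p| ≤ (n:ℝ)+K ∧ |q| ≤ (n:ℝ)+K ∧
      ((n:ℝ)+1)^2 * a (n+1) = p * q * a n) : RB a K := by
  intro n
  obtain ⟨p, q, hp, hq, hpq⟩ := h n
  have h1 : |a (n+1)| * ((n:ℝ)+1)^2 = |((n:ℝ)+1)^2 * a (n+1)| := by
    rw [abs_mul, abs_of_nonneg (by positivity : (0:ℝ) ≤ ((n:ℝ)+1)^2)]; ring
  rw [h1, hpq, abs_mul, abs_mul]
  have hnK : (0:ℝ) ≤ (n:ℝ)+K := by positivity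
  calc |p| * |q| * |a n| ≤ (((n:ℝ)+K) * ((n:ℝ)+K)) * |a n| := by
        apply mul_le_mul_of_nonneg_right _ (abs_nonneg _)
        exact mul_le_mul hp hq (abs_nonneg _) hnK
    _ = ((n:ℝ)+K)^2 * |a n| := by ring

lemma RB.psum_hasDerivAt {a : ℕ → ℝ} {K : ℝ} (hK : 0 ≤ K) (h : RB a K) {u : ℝ}
    (hu : |u| < 1) : HasDerivAt (psum a) (psum (shf a) u) u := by
  set r : ℝ := (1 + |u|)/2 with hrdef
  have hr0 : 0 < r := by positivity
  have hr1 : r < 1 := by rw [hrdef]; linarith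
  have hur : |u| < r := by rw [hrdef]; linarith
  have hrabs : |r| < 1 := by rwa [abs_of_pos hr0]
  have hsum_bnd : Summable (fun n : ℕ => ((n:ℝ)+1) * |a (n+1)| * r ^ n) := by
    have := ((h.abs).shift hK).summable hrabs
    simpa [SubH.shf, mul_assoc] using this
  have key : HasDerivAt (fun z : ℝ => ∑' n, a (n+1) * z^(n+1))
      (∑' n, a (n+1) * (((n:ℝ)+1) * u^n)) u := by
    apply hasDerivAt_tsum_of_isPreconnected hsum_bnd (isOpen_Ioo (a := -r) (b := r))
      ((convex_Ioo (-r) r).isPreconnected)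
      (g' := fun n y => a (n+1) * (((n:ℝ)+1) * y^n)) (y₀ := 0)
    · intro n y _
      have := (hasDerivAt_pow (n+1) y).const_mul (a (n+1))
      exact this.congr_deriv (by push_cast; simp)
    · intro n y hy
      have hyr : |y| ≤ r := by
        rw [abs_le]
        exact ⟨le_of_lt hy.1, le_of_lt hy.2⟩
      rw [Real.norm_eq_abs, abs_mul, abs_mul]
      have h1 : |((n:ℝ)+1)| = (n:ℝ)+1 := abs_of_nonneg (by positivity)
      have h2 : |y^n| ≤ r^n := by
        rw [abs_pow]
        exact pow_le_pow_left₀ (abs_nonneg y) hyr n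
      rw [h1]
      calc |a (n+1)| * (((n:ℝ)+1) * |y^n|)
          ≤ |a (n+1)| * (((n:ℝ)+1) * r^n) := by
            apply mul_le_mul_of_nonneg_left _ (abs_nonneg _)
            exact mul_le_mul_of_nonneg_left h2 (by positivity)
        _ = ((n:ℝ)+1) * |a (n+1)| * r^n := by ring
    · exact ⟨by linarith, by linarith⟩
    · apply Summable.congr summable_zero
      intro n
      simp
    · exact ⟨by linarith [neg_abs_le u], by linarith [le_abs_self u]⟩
  have key2 : HasDerivAt (fun z : ℝ => a 0 + ∑' n, a (n+1) * z^(n+1))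
      (∑' n, a (n+1) * (((n:ℝ)+1) * u^n)) u := key.const_add (a 0)
  have heq : psum a =ᶠ[𝓝 u] (fun z : ℝ => a 0 + ∑' n, a (n+1) * z^(n+1)) := by
    have hmem : Set.Ioo (-r) r ∈ 𝓝 u :=
      (isOpen_Ioo).mem_nhds ⟨by linarith [neg_abs_le u], by linarith [le_abs_self u]⟩
    filter_upwards [hmem] with x hx
    have hx1 : |x| < 1 := by
      rw [abs_lt]
      constructor <;> [linarith [hx.1]; linarith [hx.2]]
    have hsx := h.summable hx1
    rw [psum, Summable.tsum_eq_zero_add hsx]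
    simp
  have := key2.congr_of_eventuallyEq heq
  refine this.congr_deriv ?_
  rw [psum]
  exact tsum_congr fun n => by simp only [SubH.shf]; ring

lemma psum_zero (a : ℕ → ℝ) : psum a 0 = a 0 := by
  rw [psum]
  rw [tsum_eq_single 0 (fun n hn => by simp [zero_pow hn])]
  simp

variable {α β : ℝ}

lemma RB_cc (hα : 0 < α) (hβ : 0 < β) : RB (cc α β) (max α β) := by
  have hK : (0:ℝ) ≤ max α β := le_trans hα.le (le_max_left _ _)
  apply RB_of_sq hK
  intro n
  have hαK : α ≤ max α β := le_max_left _ _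
  have hβK : β ≤ max α β := le_max_right _ _
  have hn : (0:ℝ) ≤ (n:ℝ) := Nat.cast_nonneg n
  refine ⟨(n:ℝ) - α, (n:ℝ) - β, ?_, ?_, ?_⟩
  · rw [abs_le]; constructor <;> nlinarith
  · rw [abs_le]; constructor <;> nlinarith
  · rw [cc_succ]
lemma RB_dd (hα : 0 < α) (hβ : 0 < β) : RB (dd α β) (max α β + 1) := by
  have hK : (0:ℝ) ≤ max α β + 1 := by positivity
  apply RB_of_sq hK
  intro n
  have hαK : α ≤ max α β := le_max_left _ _
  have hβK : β ≤ max α β := le_max_right _ _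
  have hn : (0:ℝ) ≤ (n:ℝ) := Nat.cast_nonneg n
  refine ⟨1 - α + n, 1 - β + n, ?_, ?_, ?_⟩
  · rw [abs_le]; constructor <;> nlinarith
  · rw [abs_le]; constructor <;> nlinarith
  · rw [dd_succ]
lemma RB_ee (hα : 0 < α) (hβ : 0 < β) : RB (ee α β) (max α β) := by
  have hK : (0:ℝ) ≤ max α β := le_trans hα.le (le_max_left _ _)
  apply RB_of_sq hK
  intro n
  have hαK : α ≤ max α β := le_max_left _ _
  have hβK : β ≤ max α β := le_max_right _ _
  have hn : (0:ℝ) ≤ (n:ℝ) := Nat.cast_nonneg n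
  refine ⟨α + n, β + n, ?_, ?_, ?_⟩
  · rw [abs_le]; constructor <;> nlinarith
  · rw [abs_le]; constructor <;> nlinarith
  · rw [ee_succ]
lemma RB_bb : RB (bb α β) (max |α+β-1| 1) := by
  have hK : (0:ℝ) ≤ max |α+β-1| 1 := le_trans zero_le_one (le_max_right _ _)
  apply RB_of_sq hK
  intro n
  have h1 : |α+β-1| ≤ max |α+β-1| 1 := le_max_left _ _
  have h2 : (1:ℝ) ≤ max |α+β-1| 1 := le_max_right _ _
  have hn : (0:ℝ) ≤ (n:ℝ) := Nat.cast_nonneg n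
  refine ⟨α + β - 1 + n, (n:ℝ) + 1, ?_, ?_, ?_⟩
  · calc |α + β - 1 + (n:ℝ)| ≤ |α+β-1| + |(n:ℝ)| := abs_add_le _ _
      _ ≤ max |α+β-1| 1 + (n:ℝ) := by rw [abs_of_nonneg hn]; linarith
      _ = (n:ℝ) + max |α+β-1| 1 := by ring
  · rw [abs_of_nonneg (by positivity)]; linarith
  · have hb := bb_succ α β n
    linear_combination ((n:ℝ)+1) * hb

lemma hypFR_eq (x : ℝ) : hypFR (-α) (-β) 1 x = psum (cc α β) x := by
  rw [hypFR, psum]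
  exact tsum_congr fun n => by rw [pochR_one, cc]

/-- The key series identity:  `g'(u) + u g''(u) = α β F(1-α,1-β;1;u)`. -/
lemma deriv_combo (hα : 0 < α) (hβ : 0 < β) {u : ℝ} (hu : |u| < 1) :
    psum (shf (cc α β)) u + u * psum (shf (shf (cc α β))) u
      = α * β * psum (dd α β) u := by
  have hK : (0:ℝ) ≤ max α β := le_trans hα.le (le_max_left _ _)
  have RB0 := RB_cc hα hβ
  have RB1 := RB0.shift hK
  have RB2 := RB1.shift (by linarith)
  have S1 : Summable (fun n => shf (cc α β) n * u^n) := RB1.summable hu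
  have S2 : Summable (fun n => shf (shf (cc α β)) n * u^n) := RB2.summable hu
  set a := cc α β with ha
  set t2 : ℕ → ℝ := fun n => (n:ℝ) * ((n:ℝ)+1) * a (n+1) * u^n with ht2
  have hshift : ∀ n : ℕ, t2 (n+1) = (shf (shf a) n * u^n) * u := by
    intro n
    simp only [ht2, shf]
    push_cast
    ring
  have St2' : Summable (fun n => t2 (n+1)) := by
    apply Summable.congr (S2.mul_right u)
    intro n
    rw [hshift]
  have St2 : Summable t2 := (summable_nat_add_iff 1).mp St2'
  have hug2 : u * psum (shf (shf a)) u = ∑' n, t2 n := by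
    rw [psum, ← tsum_mul_left, Summable.tsum_eq_zero_add St2]
    have h0 : t2 0 = 0 := by simp [ht2]
    rw [h0, zero_add]
    exact tsum_congr fun n => by rw [hshift]; ring
  rw [hug2, psum, ← Summable.tsum_add S1 St2]
  have hterm : ∀ n : ℕ, shf a n * u^n + t2 n = α * β * (dd α β n * u^n) := by
    intro n
    have hk := key_cd α β n
    have h1 : shf a n * u^n + t2 n = (((n:ℝ)+1)^2 * a (n+1)) * u^n := by
      simp only [shf, ht2]; ring
    rw [h1, ha]
    linear_combination (u^n) * hk
  rw [tsum_congr hterm, tsum_mul_left, psum]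

lemma cauchy_de (hα : 0 < α) (hβ : 0 < β) {u : ℝ} (hu0 : 0 ≤ u) (hu : u < 1) :
    psum (dd α β) u * psum (bb α β) u = psum (ee α β) u := by
  have habs : |u| < 1 := by rwa [abs_of_nonneg hu0]
  have hfn : Summable (fun n => ‖dd α β n * u^n‖) := by
    apply Summable.congr (((RB_dd hα hβ).abs).summable habs)
    intro n
    rw [Real.norm_eq_abs, abs_mul, abs_pow, abs_of_nonneg hu0]
  have hgn : Summable (fun n => ‖bb α β n * u^n‖) := by
    apply Summable.congr ((RB_bb.abs).summable habs)
    intro n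
    rw [Real.norm_eq_abs, abs_mul, abs_pow, abs_of_nonneg hu0]
  rw [psum, psum, tsum_mul_tsum_eq_tsum_sum_range_of_summable_norm hfn hgn, psum]
  apply tsum_congr
  intro n
  have : ∑ k ∈ Finset.range (n+1), dd α β k * u^k * (bb α β (n-k) * u^(n-k))
      = ∑ k ∈ Finset.range (n+1), dd α β k * bb α β (n-k) * u^n := by
    apply Finset.sum_congr rfl
    intro k hk
    have hkn : k ≤ n := Nat.lt_succ_iff.mp (Finset.mem_range.mp hk)
    have : u^k * u^(n-k) = u^n := by
      rw [← pow_add]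
      congr 1
      omega
    calc dd α β k * u^k * (bb α β (n-k) * u^(n-k))
        = dd α β k * bb α β (n-k) * (u^k * u^(n-k)) := by ring
      _ = dd α β k * bb α β (n-k) * u^n := by rw [this]
  rw [this, ← Finset.sum_mul, ← SS, conv_eq]

lemma psum_ee_ge_one (hα : 0 < α) (hβ : 0 < β) {u : ℝ} (hu0 : 0 ≤ u) (hu : u < 1) :
    1 ≤ psum (ee α β) u := by
  have habs : |u| < 1 := by rwa [abs_of_nonneg hu0]
  have hsum := (RB_ee hα hβ).summable habs
  have h0 : ee α β 0 * u^0 = 1 := by rw [ee_zero]; simp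
  rw [psum, ← h0]
  exact Summable.le_tsum hsum 0 fun n _ => mul_nonneg (ee_nonneg α β hα hβ n) (pow_nonneg hu0 n)

lemma psum_dd_pos (hα : 0 < α) (hβ : 0 < β) {u : ℝ} (hu0 : 0 ≤ u) (hu : u < 1) :
    0 < psum (dd α β) u := by
  have hKb : (0:ℝ) ≤ max |α+β-1| 1 := le_trans zero_le_one (le_max_right _ _)
  have hBcont : ContinuousOn (psum (bb α β)) (Set.Icc 0 u) := by
    intro x hx
    have hx1 : |x| < 1 := by
      rw [abs_of_nonneg hx.1]
      exact lt_of_le_of_lt hx.2 hu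
    exact ((RB_bb.psum_hasDerivAt hKb hx1).continuousAt).continuousWithinAt
  have hBne : ∀ x ∈ Set.Icc (0:ℝ) u, psum (bb α β) x ≠ 0 := by
    intro x hx hx0
    have hx1 : x < 1 := lt_of_le_of_lt hx.2 hu
    have h := cauchy_de hα hβ hx.1 hx1
    rw [hx0, mul_zero] at h
    have := psum_ee_ge_one hα hβ hx.1 hx1
    linarith [h ▸ this]
  have hB0 : psum (bb α β) 0 = 1 := by rw [psum_zero, bb_zero]
  have hBu : 0 < psum (bb α β) u := by
    by_contra hle
    push_neg at hle
    have hlt : psum (bb α β) u < 0 :=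
      lt_of_le_of_ne hle (hBne u (Set.mem_Icc.mpr ⟨hu0, le_refl u⟩))
    have hsub : Set.Icc (psum (bb α β) u) (psum (bb α β) 0) ⊆
        psum (bb α β) '' Set.Icc 0 u := intermediate_value_Icc' hu0 hBcont
    have h0mem : (0:ℝ) ∈ Set.Icc (psum (bb α β) u) (psum (bb α β) 0) := by
      rw [hB0]
      exact ⟨le_of_lt hlt, zero_le_one⟩
    obtain ⟨x, hx, hfx⟩ := hsub h0mem
    exact hBne x hx hfx
  have hC := cauchy_de hα hβ hu0 hu
  have hE := psum_ee_ge_one hα hβ hu0 hu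
  nlinarith

open Complex in
lemma normSq_hasFDerivAt (w : ℂ) :
    HasFDerivAt Complex.normSq
      ((2*w.re) • Complex.reCLM + (2*w.im) • Complex.imCLM) w := by
  have hre : HasFDerivAt (fun z : ℂ => z.re) Complex.reCLM w := Complex.reCLM.hasFDerivAt
  have him : HasFDerivAt (fun z : ℂ => z.im) Complex.imCLM w := Complex.imCLM.hasFDerivAt
  have h : HasFDerivAt (fun y : ℂ => y.re * y.re + y.im * y.im) _ w := (hre.mul hre).add (him.mul him)
  have hfn : (fun y : ℂ => y.re * y.re + y.im * y.im) = Complex.normSq := by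
    funext y
    rw [Complex.normSq_apply]
  rw [hfn] at h
  rw [two_mul, two_mul, add_smul, add_smul]
  exact h

/-- the differential of `normSq`. -/
noncomputable def DN (w : ℂ) : ℂ →L[ℝ] ℝ :=
  (2*w.re) • Complex.reCLM + (2*w.im) • Complex.imCLM

lemma DN_apply (w v : ℂ) : DN w v = 2*w.re*v.re + 2*w.im*v.im := by
  simp [DN]

lemma main_calc (hα : 0 < α) (hβ : 0 < β) (z : ℂ) (hz : ‖z‖ < 1) :
    lap (fun w => psum (cc α β) (Complex.normSq w)) z
      = 4 * (α * β * psum (dd α β) (Complex.normSq z)) := by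
  have hK : (0:ℝ) ≤ max α β := le_trans hα.le (le_max_left _ _)
  have RB0 := RB_cc hα hβ
  have RB1 := RB0.shift hK
  have RB2 := RB1.shift (by linarith)
  set u := Complex.normSq z with hudef
  have hu0 : 0 ≤ u := Complex.normSq_nonneg z
  have hu1 : u < 1 := by
    rw [hudef, ← Complex.sq_norm]
    nlinarith [norm_nonneg z]
  set s : ℝ := (u+1)/2 with hsdef
  have hs1 : s < 1 := by rw [hsdef]; linarith
  have hus : u < s := by rw [hsdef]; linarith
  set U : Set ℂ := {w : ℂ | Complex.normSq w < s} with hUdef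
  have hUopen : IsOpen U := isOpen_lt Complex.continuous_normSq continuous_const
  have hzU : z ∈ U := hus
  have habs : ∀ w ∈ U, |Complex.normSq w| < 1 := by
    intro w hw
    rw [abs_of_nonneg (Complex.normSq_nonneg w)]
    exact lt_trans hw hs1
  -- first derivative on U
  have D1 : ∀ w ∈ U, HasFDerivAt (fun w => psum (cc α β) (Complex.normSq w))
      (psum (shf (cc α β)) (Complex.normSq w) • DN w) w := by
    intro w hw
    exact (RB0.psum_hasDerivAt hK (habs w hw)).comp_hasFDerivAt w (normSq_hasFDerivAt w)
  -- second derivative pieces at z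
  have A1 : HasFDerivAt (fun w : ℂ => psum (shf (cc α β)) (Complex.normSq w))
      (psum (shf (shf (cc α β))) u • DN z) z :=
    (RB1.psum_hasDerivAt (by linarith) (habs z hzU)).comp_hasFDerivAt z (normSq_hasFDerivAt z)
  have A2re : HasFDerivAt (fun w : ℂ => 2*w.re) ((2:ℝ) • Complex.reCLM) z :=
    Complex.reCLM.hasFDerivAt.const_mul (2:ℝ)
  have A2im : HasFDerivAt (fun w : ℂ => 2*w.im) ((2:ℝ) • Complex.imCLM) z :=
    Complex.imCLM.hasFDerivAt.const_mul (2:ℝ)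
  have Are : HasFDerivAt (fun w : ℂ => psum (shf (cc α β)) (Complex.normSq w) * (2*w.re))
      (psum (shf (cc α β)) u • ((2:ℝ) • Complex.reCLM)
        + (2*z.re) • (psum (shf (shf (cc α β))) u • DN z)) z := A1.mul A2re
  have Aim : HasFDerivAt (fun w : ℂ => psum (shf (cc α β)) (Complex.normSq w) * (2*w.im))
      (psum (shf (cc α β)) u • ((2:ℝ) • Complex.imCLM)
        + (2*z.im) • (psum (shf (shf (cc α β))) u • DN z)) z := A1.mul A2im
  -- eventual equality of the first fderiv applied in the two directions
  have ev1 : (fun w => fderiv ℝ (fun w => psum (cc α β) (Complex.normSq w)) w 1)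
      =ᶠ[nhds z] (fun w => psum (shf (cc α β)) (Complex.normSq w) * (2*w.re)) := by
    filter_upwards [hUopen.mem_nhds hzU] with w hw
    rw [(D1 w hw).fderiv]
    rw [ContinuousLinearMap.smul_apply, DN_apply]
    simp [Complex.one_re, Complex.one_im]
  have evI : (fun w => fderiv ℝ (fun w => psum (cc α β) (Complex.normSq w)) w Complex.I)
      =ᶠ[nhds z] (fun w => psum (shf (cc α β)) (Complex.normSq w) * (2*w.im)) := by
    filter_upwards [hUopen.mem_nhds hzU] with w hw
    rw [(D1 w hw).fderiv]
    rw [ContinuousLinearMap.smul_apply, DN_apply]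
    simp [Complex.I_re, Complex.I_im]
  rw [lap]
  rw [ev1.fderiv_eq, evI.fderiv_eq, Are.fderiv, Aim.fderiv]
  simp only [ContinuousLinearMap.add_apply, ContinuousLinearMap.smul_apply,
    DN_apply, smul_eq_mul, Complex.one_re, Complex.one_im, Complex.I_re, Complex.I_im,
    Complex.reCLM_apply, Complex.imCLM_apply]
  have hcombo := deriv_combo hα hβ (habs z hzU)
  rw [← hudef] at hcombo
  have hsq : z.re * z.re + z.im * z.im = u := (Complex.normSq_apply z).symm
  linear_combination 4 * hcombo + 4 * psum (shf (shf (cc α β))) u * hsq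

end SubH

theorem stmt16 (α β : ℝ) (hα : 0 < α) (hβ : 0 < β) (z : ℂ)
    (hz : ‖z‖ < 1) :
    0 ≤ lap (fun w => hypFR (-α) (-β) 1 (‖w‖ ^ 2)) z := by
  have hfun : (fun w : ℂ => hypFR (-α) (-β) 1 (‖w‖ ^ 2))
      = fun w : ℂ => SubH.psum (SubH.cc α β) (Complex.normSq w) := by
    funext w
    rw [SubH.hypFR_eq, Complex.sq_norm]
  rw [hfun, SubH.main_calc hα hβ z hz]
  have hu0 : 0 ≤ Complex.normSq z := Complex.normSq_nonneg z
  have hu1 : Complex.normSq z < 1 := by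
    rw [← Complex.sq_norm]
    nlinarith [norm_nonneg z]
  have hpos := SubH.psum_dd_pos hα hβ hu0 hu1
  nlinarith [mul_pos (mul_pos hα hβ) hpos]
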